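/- Let π be a dominant integral weight with Stab_W(π) = W_P, and let u < w be π-minuscule elements in W^P. Then the interval [u,w]^P ⊆ W^P is the same whether computed in the (left) weak Bruhat order or in the strong Bruhat order, i.e. {v ∈ W^P : u ≤ v ≤ w} = {v′ ∈ W^P : u ≤_L v′ ≤_L w}. -/

import Mathlib

open scoped Classical BigOperators

/-- A bundled setting for a finite crystallographic root system together with its
Weyl group, its action on the rational span of the weight lattice, reflections,
and the data of coefficients of roots in the basis of simple roots. -/
structure WeylSetting where
  /-- index set of the Dynkin diagram (simple roots) -/
  I : Type
  [fintypeI : Fintype I]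
  [decEqI : DecidableEq I]
  /-- rational span of the weight lattice -/
  V : Type
  [acg : AddCommGroup V]
  [mod : Module ℚ V]
  /-- the Weyl group -/
  W : Type
  [grp : Group W]
  /-- the action of the Weyl group on weights -/
  act : W →* (V ≃ₗ[ℚ] V)
  /-- the simple roots -/
  simple : I → V
  /-- the (finite) set of roots -/
  roots : Finset V
  /-- `coroot β μ` is the pairing `⟨μ, β∨⟩` -/
  coroot : V → (V →ₗ[ℚ] ℚ)
  /-- the reflection `s_β ∈ W` associated to a root `β` -/
  srefl : V → W
  /-- coefficients of a positive root in the basis of simple roots -/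
  posCoeff : V → I → ℕ
  simple_mem : ∀ i, simple i ∈ roots
  simple_indep : LinearIndependent ℚ simple
  roots_neg : ∀ β ∈ roots, -β ∈ roots
  root_pos_or_neg : ∀ β ∈ roots,
    (∃ c : I → ℚ, (∀ i, 0 ≤ c i) ∧ β = ∑ i, c i • simple i) ∨
    (∃ c : I → ℚ, (∀ i, 0 ≤ c i) ∧ -β = ∑ i, c i • simple i)
  coroot_self : ∀ β ∈ roots, coroot β β = 2
  crystallographic : ∀ β ∈ roots, ∀ γ ∈ roots, ∃ n : ℤ, coroot β γ = n
  posCoeff_spec : ∀ β ∈ roots,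
    (∃ c : I → ℚ, (∀ i, 0 ≤ c i) ∧ β = ∑ i, c i • simple i) →
    β = ∑ i, (posCoeff β i : ℚ) • simple i
  srefl_apply : ∀ β ∈ roots, ∀ v : V, act (srefl β) v = v - coroot β v • β
  act_faithful : ∀ g : W, (∀ v : V, act g v = v) → g = 1
  roots_invariant : ∀ g : W, ∀ β ∈ roots, act g β ∈ roots
  coroot_equivariant : ∀ g : W, ∀ β ∈ roots, ∀ v : V,
    coroot (act g β) (act g v) = coroot β v
  generated : ∀ g : W, ∃ l : List I, g = (l.map fun i => srefl (simple i)).prod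

namespace WeylSetting

attribute [instance] fintypeI decEqI acg mod grp

variable (D : WeylSetting)

/-- the simple reflection attached to a node of the Dynkin diagram -/
def s (i : D.I) : D.W := D.srefl (D.simple i)

/-- the product `s_{i_1} ⋯ s_{i_r}` of the simple reflections listed in `l` -/
def wordProd (l : List D.I) : D.W := (l.map D.s).prod

/-- `β` is a positive root: a root which is a nonnegative combination of simple roots -/
def IsPosRoot (β : D.V) : Prop :=
  β ∈ D.roots ∧ ∃ c : D.I → ℚ, (∀ i, 0 ≤ c i) ∧ β = ∑ i, c i • D.simple i

/-- the length of a Weyl group element -/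
noncomputable def length (g : D.W) : ℕ :=
  sInf {n | ∃ l : List D.I, l.length = n ∧ D.wordProd l = g}

/-- `l` is a reduced word for `g` -/
def IsReduced (l : List D.I) (g : D.W) : Prop :=
  D.wordProd l = g ∧ l.length = D.length g

/-- the number of reduced words of `g` -/
noncomputable def RedCard (g : D.W) : ℕ := Nat.card {l : List D.I // D.IsReduced l g}

/-- the (strong) Bruhat order on the Weyl group -/
def bruhatLE : D.W → D.W → Prop :=
  Relation.ReflTransGen
    (fun a b => (∃ β, D.IsPosRoot β ∧ b = D.srefl β * a) ∧ D.length a < D.length b)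

/-- strict (strong) Bruhat order -/
def bruhatLT (a b : D.W) : Prop := D.bruhatLE a b ∧ a ≠ b

/-- the left weak Bruhat order: `a ≤_L b` iff `ℓ(b a⁻¹) + ℓ(a) = ℓ(b)` -/
def weakLE (a b : D.W) : Prop := D.length (b * a⁻¹) + D.length a = D.length b

/-- the height of a positive root: the sum of its coefficients in the simple roots -/
noncomputable def ht (β : D.V) : ℕ := ∑ i, D.posCoeff β i

/-- an integral weight: the pairings with all positive coroots are integers -/
def IsIntegral (lam : D.V) : Prop :=
  ∀ β, D.IsPosRoot β → ∃ n : ℤ, D.coroot β lam = n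

/-- a dominant integral weight -/
def IsDominant (lam : D.V) : Prop :=
  D.IsIntegral lam ∧ ∀ i, 0 ≤ D.coroot (D.simple i) lam

/-- a pre-dominant integral weight: `⟨λ, β∨⟩ ≥ -1` for all positive roots `β` -/
def IsPreDominant (lam : D.V) : Prop :=
  D.IsIntegral lam ∧ ∀ β, D.IsPosRoot β → -1 ≤ D.coroot β lam

/-- the diagram `D(λ) = {β ∈ R⁺ : ⟨λ, β∨⟩ = -1}` of a pre-dominant weight -/
noncomputable def diagram (lam : D.V) : Finset D.V :=
  D.roots.filter fun β => D.IsPosRoot β ∧ D.coroot β lam = -1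

/-- `IsWeightPath λ [β₁, …, β_r]` says that
`λ = λ₀ →β₁ λ₁ →β₂ ⋯ →β_r λ_r` is a `λ`-path, i.e. each `β_j` is a positive
root, `⟨λ_{j-1}, β_j∨⟩ = -1` and `λ_j = s_{β_j}(λ_{j-1})`. -/
def IsWeightPath : D.V → List D.V → Prop
  | _, [] => True
  | lam, β :: rest =>
      D.IsPosRoot β ∧ D.coroot β lam = -1 ∧
        IsWeightPath (D.act (D.srefl β) lam) rest

/-- the term `1/β₁ ⋅ 1/(β₁+β₂) ⋅ … ⋅ 1/(β₁+⋯+β_r)` attached to a path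
`(β₁, …, β_r)`, computed in a field `F` via a linear embedding `emb`. -/
noncomputable def pathTerm {F : Type} [Field F] [Algebra ℚ F]
    (emb : D.V →ₗ[ℚ] F) (l : List D.V) : F :=
  ∏ j ∈ Finset.range l.length, (emb ((l.take (j + 1)).sum))⁻¹

/-- `w` is a π-minuscule element (in the sense of Peterson). -/
def IsMinuscule (pi : D.V) (w : D.W) : Prop :=
  ∃ l : List D.I, D.IsReduced l w ∧
    ∀ k : Fin l.length,
      D.coroot (D.simple (l.get k)) (D.act (D.wordProd (l.drop (k.val + 1))) pi) = 1

/-- the stabilizer `W_π = Stab_W(π)` of a weight -/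
def stab (pi : D.V) : Subgroup D.W where
  carrier := {g | D.act g pi = pi}
  one_mem' := by simp
  mul_mem' := by
    intro a b ha hb
    simp only [Set.mem_setOf_eq] at *
    calc D.act (a * b) pi = D.act a (D.act b pi) := by rw [map_mul]; rfl
    _ = pi := by rw [hb, ha]
  inv_mem' := by
    intro a ha
    simp only [Set.mem_setOf_eq] at *
    calc D.act a⁻¹ pi = D.act a⁻¹ (D.act a pi) := by rw [ha]
    _ = D.act (a⁻¹ * a) pi := by rw [map_mul]; rfl
    _ = pi := by simp

/-- `u` is the minimal-length representative of its coset `uH` -/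
def IsMinRep (H : Subgroup D.W) (u : D.W) : Prop :=
  ∀ g : D.W, u⁻¹ * g ∈ H → D.length u ≤ D.length g

/-- `a` and `b` lie in the same coset of `H`, i.e. `aH = bH` -/
def SameCoset (H : Subgroup D.W) (a b : D.W) : Prop := a⁻¹ * b ∈ H

/-- `u →β w` in `W^P`: `β` is a positive root, `u, w` are minimal-length
representatives, `s_β w H = u H`, and `u < w` in Bruhat order -/
def Arrow (H : Subgroup D.W) (u w : D.W) (β : D.V) : Prop :=
  D.IsPosRoot β ∧ D.IsMinRep H u ∧ D.IsMinRep H w ∧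
    D.SameCoset H (D.srefl β * w) u ∧ D.bruhatLT u w

/-- `ArrowPath H w [β₁, …, β_r]` encodes a directed path
`x_r →β_r ⋯ → x_1 →β₁ x_0 = w` in the Bruhat graph on `W^P`. -/
def ArrowPath (H : Subgroup D.W) : D.W → List D.V → Prop
  | _, [] => True
  | w, β :: rest => ∃ u, D.Arrow H u w β ∧ ArrowPath H u rest

/-- directed paths as above whose vertices all lie above `v` in Bruhat order -/
def ArrowPathGE (H : Subgroup D.W) (v : D.W) : D.W → List D.V → Prop
  | _, [] => True
  | w, β :: rest => ∃ u, D.Arrow H u w β ∧ D.bruhatLE v u ∧ ArrowPathGE H v u rest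

/-- directed paths from `u` to `w`:
`u = x_r →β_r ⋯ → x_1 →β₁ x_0 = w` encoded by the list `[β₁, …, β_r]`. -/
def ArrowPathFromTo (H : Subgroup D.W) (u : D.W) : D.W → List D.V → Prop
  | w, [] => u = w
  | w, β :: rest => ∃ x, D.Arrow H x w β ∧ ArrowPathFromTo H u x rest

/-- `S(w) = {β ∈ R⁺ : s_β w < w}` -/
noncomputable def Sset (w : D.W) : Finset D.V :=
  D.roots.filter fun β => D.IsPosRoot β ∧ D.bruhatLT (D.srefl β * w) w

/-- `S(w/v) = {β ∈ R⁺ : v ≤ s_β w < w}` -/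
noncomputable def SsetSkew (v w : D.W) : Finset D.V :=
  D.roots.filter fun β =>
    D.IsPosRoot β ∧ D.bruhatLE v (D.srefl β * w) ∧ D.bruhatLT (D.srefl β * w) w

/-- an oriented edge `x → y` in the Bruhat graph of `G/P`: `x, y` are minimal
representatives, `xH < yH`, and `yH = x s_γ H` for some positive root `γ` -/
def GEdge (H : Subgroup D.W) (x y : D.W) : Prop :=
  D.IsMinRep H x ∧ D.IsMinRep H y ∧ D.bruhatLT x y ∧
    ∃ γ, D.IsPosRoot γ ∧ D.SameCoset H (x * D.srefl γ) y

/-- the (unique) positive root `γ` with `yH = x s_γ H` attached to an edge -/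
noncomputable def edgeRoot (H : Subgroup D.W) (x y : D.W) : D.V :=
  if h : ∃ γ, D.IsPosRoot γ ∧ D.SameCoset H (x * D.srefl γ) y then h.choose else 0

/-- `GChainTo H v t [x₁, …, x_r]` encodes a directed path
`v ≤ x_r → ⋯ → x_1 → x_0 = t` in the Bruhat graph of `G/P` -/
def GChainTo (H : Subgroup D.W) (v : D.W) : D.W → List D.W → Prop
  | _, [] => True
  | t, x :: rest => D.GEdge H x t ∧ D.bruhatLE v x ∧ GChainTo H v x rest

/-- the weighted term
`(m_Λ(x_r,x_{r-1})/W_Λ(x_r)) ⋯ (m_Λ(x_1,x_0)/W_Λ(x_1))` of a path in the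
`Λ`-Bruhat graph, computed in a field `F` via a linear embedding `emb`. -/
noncomputable def chainTerm {F : Type} [Field F] [Algebra ℚ F]
    (emb : D.V →ₗ[ℚ] F) (H : Subgroup D.W) (Lam : D.W → D.V) (w : D.W) :
    D.W → List D.W → F
  | _, [] => 1
  | t, x :: rest =>
      algebraMap ℚ F (D.coroot (D.edgeRoot H x t) (Lam x)) *
        (emb (D.act x (Lam x) - D.act w (Lam x)))⁻¹ *
        chainTerm emb H Lam w x rest

/-- the Bruhat order on cosets: `aH ≤ bH` -/
def cosetLE (H : Subgroup D.W) (a b : D.W) : Prop :=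
  ∃ x y, D.SameCoset H a x ∧ D.SameCoset H b y ∧ D.bruhatLE x y

/-- the (standard) parabolic subgroup generated by simple reflections in `J` -/
def parab (J : Set D.I) : Subgroup D.W := Subgroup.closure (D.s '' J)

/-- `X*(T)_P`: integral weights orthogonal to all coroots of `W_P`,
i.e. to `γ∨` for all positive roots `γ` in the span of the simple roots of `P` -/
def OrthWeightP (J : Set D.I) (lam : D.V) : Prop :=
  D.IsIntegral lam ∧
    ∀ γ, D.IsPosRoot γ → γ ∈ Submodule.span ℚ (D.simple '' J) → D.coroot γ lam = 0

/-- an admissible function `Λ : [v,w]^P → X*(T)_P` -/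
def Admissible (J : Set D.I) (v w : D.W) (Lam : D.W → D.V) : Prop :=
  (∀ x, D.IsMinRep (D.parab J) x → D.bruhatLE v x → D.bruhatLE x w →
      D.OrthWeightP J (Lam x)) ∧
  (∀ x, D.IsMinRep (D.parab J) x → D.bruhatLE v x → D.bruhatLE x w → x ≠ w →
      D.act x (Lam x) ≠ D.act w (Lam x))

/-- the subword of `l` with letters at the positions in `S`, in increasing order -/
def subwordF (l : List D.I) (S : Finset (Fin l.length)) : List D.I :=
  ((List.finRange l.length).filter fun j => j ∈ S).map l.get

/-- `β_j = s_{i_1} ⋯ s_{i_{j-1}}(α_{i_j})` attached to a reduced word `l` -/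
noncomputable def refRoot (l : List D.I) (j : Fin l.length) : D.V :=
  D.act (D.wordProd (l.take j.val)) (D.simple (l.get j))

/-- the Weyl group is simply laced: the Cartan pairing is symmetric -/
def SimplyLaced : Prop :=
  ∀ i j, D.coroot (D.simple i) (D.simple j) = D.coroot (D.simple j) (D.simple i)

/-- generating relation of the heap order of the word `l`:
`p_j < p_k` whenever `j < k` and `s_{i_j}`, `s_{i_k}` do not commute -/
def heapCovers (l : List D.I) (j k : Fin l.length) : Prop :=
  (j : ℕ) < (k : ℕ) ∧ D.s (l.get j) * D.s (l.get k) ≠ D.s (l.get k) * D.s (l.get j)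

/-- the heap order of the word `l`: the minimal partial order generated by
`heapCovers` -/
def heapLE (l : List D.I) : Fin l.length → Fin l.length → Prop :=
  Relation.ReflTransGen (D.heapCovers l)

/-- strict heap order -/
def heapLT (l : List D.I) (j k : Fin l.length) : Prop := D.heapLE l j k ∧ j ≠ k

/-- `F` is an order filter of the heap `H(w)` of the word `l` -/
def IsHeapFilter (l : List D.I) (F : Finset (Fin l.length)) : Prop :=
  ∀ j k, j ∈ F → D.heapLE l j k → k ∈ F

/-- `i` and `j` are joined by an edge of the Dynkin diagram -/
def adjDynkin (i j : D.I) : Prop := i ≠ j ∧ D.s i * D.s j ≠ D.s j * D.s i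

/-- an elementary excitation `A ▷ B` of subsets of the heap of the word `l` -/
def Excite (l : List D.I) (A B : Finset (Fin l.length)) : Prop :=
  ∃ p q, D.heapLT l p q ∧ l.get p = l.get q ∧ q ∈ A ∧ p ∈ B ∧
    A.erase q = B.erase p ∧
    (∀ z, D.heapLT l p z → D.heapLT l z q → l.get z ≠ l.get p) ∧
    ∀ u ∈ A, D.heapLE l p u → D.heapLE l u q → ¬ D.adjDynkin (l.get p) (l.get u)

/-- `A` is an excited diagram of `F` in the heap of the word `l`,
i.e. `A ∈ E_{H(w)}(F)` -/
def InExcited (l : List D.I) (F A : Finset (Fin l.length)) : Prop :=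
  Relation.ReflTransGen (D.Excite l) F A

end WeylSetting

/-!
For `x ∈ W^P` put `depth(x) = ht(π - xπ)`. Along a reduced word each simple reflection raises
the depth by a positive integer, so `ℓ(x) ≤ depth(x)`, with equality when `x` is `π`-minuscule.

Let `w ∈ W^P` have `depth(w) = ℓ(w)` and let `v < w` in `W^P`. The Bruhat order on `W^P` is
graded, so `v ≤ z` for some `z ∈ W^P` covered by `w = s_γ z`. Then
`ℓ(w) = depth(z) + ⟨zπ, γ∨⟩ ht(γ) ≥ ℓ(w) - 1 + ht(γ)` forces `γ` to be a simple root `α_i`,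
and `z = s_i w` again has `depth(z) = ℓ(z)`. Induction on `ℓ(w)` gives `v ≤_L w` together with
`depth(v) = ℓ(v)`, which in turn yields `u ≤_L v`. The other inclusion holds because the weak
order is contained in the Bruhat order.
-/

namespace WeylSetting

variable (D : WeylSetting)

section Action

@[simp] lemma act_one (v : D.V) : D.act 1 v = v := by simp

lemma act_mul (a b : D.W) (v : D.V) : D.act (a * b) v = D.act a (D.act b v) := by
  simp [LinearEquiv.mul_apply]

@[simp] lemma act_inv_act (a : D.W) (v : D.V) : D.act a⁻¹ (D.act a v) = v := by
  rw [← act_mul, inv_mul_cancel, act_one]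

@[simp] lemma act_act_inv (a : D.W) (v : D.V) : D.act a (D.act a⁻¹ v) = v := by
  rw [← act_mul, mul_inv_cancel, act_one]

lemma act_injective : Function.Injective D.act := fun a b h =>
  mul_inv_eq_one.mp <| D.act_faithful _ fun v => by rw [act_mul, h, act_act_inv]

lemma act_mem_roots (g : D.W) {β : D.V} (h : β ∈ D.roots) : D.act g β ∈ D.roots :=
  D.roots_invariant g β h

lemma coroot_act {β : D.V} (hβ : β ∈ D.roots) (g : D.W) (v : D.V) :
    D.coroot (D.act g β) v = D.coroot β (D.act g⁻¹ v) := by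
  rw [← D.coroot_equivariant g β hβ, act_act_inv]

end Action

section Height

noncomputable def coords : D.V →ₗ[ℚ] D.I → ℚ :=
  (LinearMap.exists_leftInverse_of_injective (Fintype.linearCombination ℚ D.simple)
    (LinearMap.ker_eq_bot.mpr D.simple_indep.fintypeLinearCombination_injective)).choose

lemma coords_sum_smul (c : D.I → ℚ) : D.coords (∑ i, c i • D.simple i) = c := by
  have h := LinearMap.congr_fun (LinearMap.exists_leftInverse_of_injective
    (Fintype.linearCombination ℚ D.simple)
    (LinearMap.ker_eq_bot.mpr D.simple_indep.fintypeLinearCombination_injective)).choose_spec c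
  simpa [coords, Fintype.linearCombination_apply] using h

lemma coords_simple (i : D.I) : D.coords (D.simple i) = Pi.single i 1 := by
  simpa [Pi.single_apply] using D.coords_sum_smul (Pi.single i 1)

noncomputable def height : D.V →ₗ[ℚ] ℚ := ∑ i, LinearMap.proj i ∘ₗ D.coords

lemma height_apply (v : D.V) : D.height v = ∑ i, D.coords v i := by
  simp [height]

lemma height_sum_smul (c : D.I → ℚ) : D.height (∑ i, c i • D.simple i) = ∑ i, c i := by
  rw [height_apply, coords_sum_smul]

@[simp] lemma height_simple (i : D.I) : D.height (D.simple i) = 1 := by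
  simp [height_apply, coords_simple]

end Height

section Roots

lemma root_ne_zero {β : D.V} (h : β ∈ D.roots) : β ≠ 0 := by
  rintro rfl
  simpa using D.coroot_self 0 h

lemma isPosRoot_simple (i : D.I) : D.IsPosRoot (D.simple i) :=
  ⟨D.simple_mem i, Pi.single i 1, fun j => by by_cases j = i <;> simp_all,
    by simp [Pi.single_apply]⟩

lemma IsPosRoot.eq_sum_posCoeff {β : D.V} (h : D.IsPosRoot β) :
    β = ∑ i, (D.posCoeff β i : ℚ) • D.simple i :=
  D.posCoeff_spec β h.1 h.2

lemma IsPosRoot.height_eq {β : D.V} (h : D.IsPosRoot β) :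
    D.height β = ((∑ i, D.posCoeff β i : ℕ) : ℚ) := by
  conv_lhs => rw [h.eq_sum_posCoeff]
  rw [height_sum_smul]
  push_cast
  rfl

lemma IsPosRoot.one_le_height {β : D.V} (h : D.IsPosRoot β) : 1 ≤ D.height β := by
  rw [h.height_eq, Nat.one_le_cast, Nat.one_le_iff_ne_zero]
  intro h0
  apply D.root_ne_zero h.1
  rw [h.eq_sum_posCoeff]
  exact Finset.sum_eq_zero fun i _ => by simp [Finset.sum_eq_zero_iff.mp h0 i (by simp)]

variable {D} in
lemma IsPosRoot.exists_eq_simple_of_height_eq_one {β : D.V} (h : D.IsPosRoot β)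
    (h1 : D.height β = 1) : ∃ i, β = D.simple i := by
  have hsum : ∑ i, D.posCoeff β i = 1 := by exact_mod_cast h.height_eq.symm.trans h1
  obtain ⟨i, -, hi⟩ := Finset.exists_ne_zero_of_sum_ne_zero (hsum.trans_ne one_ne_zero)
  have hrest : ∀ j ≠ i, D.posCoeff β j = 0 := fun j hj => by
    have := Finset.sum_le_sum_of_subset (f := D.posCoeff β) (Finset.subset_univ {i, j})
    rw [Finset.sum_pair hj.symm] at this
    omega
  have hi1 : D.posCoeff β i = 1 := by
    rwa [Finset.sum_eq_single i (fun j _ hj => hrest j hj) (by simp)] at hsum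
  refine ⟨i, ?_⟩
  rw [h.eq_sum_posCoeff, Finset.sum_eq_single i (fun j _ hj => by simp [hrest j hj]) (by simp),
    hi1, Nat.cast_one, one_smul]

lemma isPosRoot_or_isPosRoot_neg {β : D.V} (h : β ∈ D.roots) :
    D.IsPosRoot β ∨ D.IsPosRoot (-β) :=
  (D.root_pos_or_neg β h).imp (fun h' => ⟨h, h'⟩) (fun h' => ⟨D.roots_neg β h, h'⟩)

lemma IsPosRoot.not_neg {β : D.V} (h : D.IsPosRoot β) : ¬ D.IsPosRoot (-β) := fun h' => by
  have := h'.one_le_height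
  rw [map_neg] at this
  linarith [h.one_le_height]

lemma isPosRoot_neg_of_not {β : D.V} (h : β ∈ D.roots) (hn : ¬ D.IsPosRoot β) :
    D.IsPosRoot (-β) :=
  (D.isPosRoot_or_isPosRoot_neg h).resolve_left hn

end Roots

section Reflections

noncomputable def form : D.V →ₗ[ℚ] D.V →ₗ[ℚ] ℚ :=
  ∑ γ ∈ D.roots, (LinearMap.mul ℚ ℚ).compl₁₂ (D.coroot γ) (D.coroot γ)

lemma form_apply (u v : D.V) :
    D.form u v = ∑ γ ∈ D.roots, D.coroot γ u * D.coroot γ v := by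
  simp [form]

lemma form_symm (u v : D.V) : D.form u v = D.form v u := by
  simp only [form_apply, mul_comm]

lemma form_self_pos {β : D.V} (h : β ∈ D.roots) : 0 < D.form β β := by
  have hle : D.coroot β β * D.coroot β β ≤ D.form β β := by
    rw [form_apply]
    exact Finset.single_le_sum (f := fun γ => D.coroot γ β * D.coroot γ β)
      (fun γ _ => mul_self_nonneg _) h
  rw [D.coroot_self β h] at hle
  linarith

lemma form_act (g : D.W) (u v : D.V) :
    D.form (D.act g u) (D.act g v) = D.form u v := by
  simp only [form_apply]
  refine Finset.sum_nbij' (fun γ => D.act g⁻¹ γ) (fun γ => D.act g γ)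
    (fun γ hγ => D.act_mem_roots _ hγ) (fun γ hγ => D.act_mem_roots _ hγ)
    (fun γ _ => by simp) (fun γ _ => by simp) (fun γ hγ => ?_)
  rw [D.coroot_act hγ g⁻¹, D.coroot_act hγ g⁻¹, inv_inv]

lemma act_srefl_self {β : D.V} (h : β ∈ D.roots) : D.act (D.srefl β) β = -β := by
  rw [D.srefl_apply β h, D.coroot_self β h, two_smul]
  abel

lemma coroot_mul_form {β : D.V} (h : β ∈ D.roots) (v : D.V) :
    D.coroot β v * D.form β β = 2 * D.form β v := by
  have key := D.form_act (D.srefl β) v β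
  rw [D.act_srefl_self h, D.srefl_apply β h v] at key
  simp only [map_sub, map_smul, map_neg, LinearMap.sub_apply, LinearMap.smul_apply,
    smul_eq_mul] at key
  linarith [D.form_symm β v]

lemma srefl_mul_self {β : D.V} (h : β ∈ D.roots) : D.srefl β * D.srefl β = 1 := by
  refine D.act_faithful _ fun v => ?_
  rw [act_mul, D.srefl_apply β h v, D.srefl_apply β h, map_sub, map_smul,
    D.coroot_self β h, smul_eq_mul]
  module

lemma srefl_inv {β : D.V} (h : β ∈ D.roots) : (D.srefl β)⁻¹ = D.srefl β :=
  inv_eq_of_mul_eq_one_right (D.srefl_mul_self h)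

lemma coroot_smul {β : D.V} (hβ : β ∈ D.roots) {c : ℚ} (hc : c ≠ 0)
    (hcβ : c • β ∈ D.roots) (v : D.V) : D.coroot (c • β) v = D.coroot β v / c := by
  have h1 := D.coroot_mul_form hcβ v
  have h2 := D.coroot_mul_form hβ v
  simp only [map_smul, LinearMap.smul_apply, smul_eq_mul] at h1
  have e : (D.coroot (c • β) v * c - D.coroot β v) * (c * D.form β β) = 0 := by
    linear_combination h1 - c * h2
  rw [eq_div_iff hc, ← sub_eq_zero]
  exact (mul_eq_zero.mp e).resolve_right (mul_ne_zero hc (D.form_self_pos hβ).ne')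

lemma srefl_smul {β : D.V} (hβ : β ∈ D.roots) {c : ℚ} (hc : c ≠ 0)
    (hcβ : c • β ∈ D.roots) : D.srefl (c • β) = D.srefl β :=
  D.act_injective <| LinearEquiv.ext fun v => by
    rw [D.srefl_apply _ hcβ v, D.srefl_apply _ hβ v, D.coroot_smul hβ hc hcβ v,
      smul_smul, div_mul_cancel₀ _ hc]

lemma coroot_neg {β : D.V} (hβ : β ∈ D.roots) (v : D.V) :
    D.coroot (-β) v = -D.coroot β v := by
  have h := D.coroot_smul hβ (c := -1) (by norm_num) (by simpa using D.roots_neg β hβ) v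
  rw [neg_one_smul] at h
  rw [h]
  ring

lemma srefl_conj (g : D.W) {β : D.V} (hβ : β ∈ D.roots) :
    g * D.srefl β * g⁻¹ = D.srefl (D.act g β) :=
  D.act_injective <| LinearEquiv.ext fun v => by
    rw [act_mul, act_mul, D.srefl_apply β hβ, map_sub, map_smul,
      D.srefl_apply _ (D.act_mem_roots g hβ) v, act_act_inv, D.coroot_act hβ]

lemma mul_srefl (g : D.W) {β : D.V} (hβ : β ∈ D.roots) :
    g * D.srefl β = D.srefl (D.act g β) * g := by
  rw [← D.srefl_conj g hβ, inv_mul_cancel_right]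

@[simp] lemma s_mul_self (i : D.I) : D.s i * D.s i = 1 := D.srefl_mul_self (D.simple_mem i)

@[simp] lemma s_inv (i : D.I) : (D.s i)⁻¹ = D.s i := D.srefl_inv (D.simple_mem i)

@[simp] lemma s_mul_s_mul (i : D.I) (x : D.W) : D.s i * (D.s i * x) = x := by
  rw [← mul_assoc, s_mul_self, one_mul]

@[simp] lemma mul_s_mul_s (i : D.I) (x : D.W) : x * D.s i * D.s i = x := by
  rw [mul_assoc, s_mul_self, mul_one]

end Reflections

section Length

@[simp] lemma wordProd_nil : D.wordProd [] = 1 := rfl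

@[simp] lemma wordProd_cons (i : D.I) (l : List D.I) :
    D.wordProd (i :: l) = D.s i * D.wordProd l := by
  simp [wordProd]

@[simp] lemma wordProd_append (a b : List D.I) :
    D.wordProd (a ++ b) = D.wordProd a * D.wordProd b := by
  simp [wordProd]

lemma length_le_of_wordProd_eq {g : D.W} {l : List D.I} (h : D.wordProd l = g) :
    D.length g ≤ l.length :=
  Nat.sInf_le ⟨l, rfl, h⟩

lemma exists_isReduced (g : D.W) : ∃ l, D.IsReduced l g := by
  obtain ⟨l, hl⟩ := D.generated g
  obtain ⟨l', hlen, hg⟩ := Nat.sInf_mem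
    (⟨l.length, l, rfl, hl.symm⟩ : {n | ∃ l : List D.I, l.length = n ∧ D.wordProd l = g}.Nonempty)
  exact ⟨l', hg, hlen⟩

@[simp] lemma length_one : D.length 1 = 0 :=
  Nat.le_zero.mp (D.length_le_of_wordProd_eq (l := []) rfl)

lemma eq_one_of_length_eq_zero {g : D.W} (h : D.length g = 0) : g = 1 := by
  obtain ⟨l, hl, hlen⟩ := D.exists_isReduced g
  rw [← hl, List.length_eq_zero_iff.mp (hlen.trans h), wordProd_nil]

lemma length_mul_le (a b : D.W) : D.length (a * b) ≤ D.length a + D.length b := by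
  obtain ⟨la, rfl, hla⟩ := D.exists_isReduced a
  obtain ⟨lb, rfl, hlb⟩ := D.exists_isReduced b
  simpa [hla, hlb] using D.length_le_of_wordProd_eq (D.wordProd_append la lb)

lemma length_s_le (i : D.I) : D.length (D.s i) ≤ 1 :=
  D.length_le_of_wordProd_eq (l := [i]) (by simp)

lemma length_s_mul_le (i : D.I) (x : D.W) : D.length (D.s i * x) ≤ D.length x + 1 := by
  linarith [D.length_mul_le (D.s i) x, D.length_s_le i]

lemma length_mul_s_le (i : D.I) (x : D.W) : D.length (x * D.s i) ≤ D.length x + 1 := by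
  linarith [D.length_mul_le x (D.s i), D.length_s_le i]

lemma wordProd_reverse (l : List D.I) : D.wordProd l.reverse = (D.wordProd l)⁻¹ := by
  induction l with
  | nil => simp
  | cons i m ih => simp [ih]

@[simp] lemma length_inv (g : D.W) : D.length g⁻¹ = D.length g := by
  have key (h : D.W) : D.length h⁻¹ ≤ D.length h := by
    obtain ⟨l, hl, hlen⟩ := D.exists_isReduced h
    rw [← hlen, ← List.length_reverse]
    exact D.length_le_of_wordProd_eq (by rw [wordProd_reverse, hl])
  exact le_antisymm (key g) (by simpa using key g⁻¹)

end Length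

section Exchange

lemma eq_smul_simple_of_not_isPosRoot_act_s {γ : D.V} {i : D.I} (hγ : D.IsPosRoot γ)
    (hneg : ¬ D.IsPosRoot (D.act (D.s i) γ)) : ∃ c : ℚ, 0 < c ∧ γ = c • D.simple i := by
  obtain ⟨d, hd0, hd⟩ := (D.isPosRoot_neg_of_not (D.act_mem_roots _ hγ.1) hneg).2
  obtain ⟨c, hc0, rfl⟩ := hγ.2
  have hc : ∀ j ≠ i, c j = 0 := fun j hj => by
    have := congr_fun (congrArg D.coords hd) j
    simp [s, D.srefl_apply _ (D.simple_mem i), coords_simple,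
      Pi.single_apply, hj] at this
    linarith [hc0 j, hd0 j]
  have hsum : ∑ j, c j • D.simple j = c i • D.simple i :=
    Finset.sum_eq_single i (fun j _ hj => by simp [hc j hj]) (by simp)
  refine ⟨c i, lt_of_le_of_ne (hc0 i) fun h => D.root_ne_zero hγ.1 ?_, hsum⟩
  rw [hsum, ← h, zero_smul]

/-- The strong exchange condition. -/
theorem exists_sublist_wordProd_eq_mul_srefl {l : List D.I} {g : D.W} (hl : D.IsReduced l g)
    {β : D.V} (hβ : D.IsPosRoot β) (hneg : ¬ D.IsPosRoot (D.act g β)) :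
    ∃ l', l'.Sublist l ∧ l'.length + 1 = l.length ∧ D.wordProd l' = g * D.srefl β := by
  induction l generalizing g with
  | nil =>
    obtain ⟨rfl, -⟩ := hl
    exact absurd hβ (by simpa using hneg)
  | cons i m ih =>
    obtain ⟨rfl, hlen⟩ := hl
    have hm : D.IsReduced m (D.wordProd m) := by
      refine ⟨rfl, le_antisymm ?_ (D.length_le_of_wordProd_eq rfl)⟩
      have := D.length_s_mul_le i (D.wordProd m)
      simp only [wordProd_cons, List.length_cons] at hlen this
      omega
    by_cases hpos : D.IsPosRoot (D.act (D.wordProd m) β)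
    · obtain ⟨c, hc, hrep⟩ := D.eq_smul_simple_of_not_isPosRoot_act_s hpos
        (by rwa [← act_mul, ← wordProd_cons])
      have hsrefl : D.srefl (D.act (D.wordProd m) β) = D.s i := by
        have hroot := D.act_mem_roots (D.wordProd m) hβ.1
        rw [hrep] at hroot ⊢
        exact D.srefl_smul (D.simple_mem i) hc.ne' hroot
      refine ⟨m, List.sublist_cons_self i m, rfl, ?_⟩
      rw [wordProd_cons, mul_assoc, D.mul_srefl _ hβ.1, hsrefl, s_mul_s_mul]
    · obtain ⟨l', hsub, hlen', hprod⟩ := ih hm hpos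
      refine ⟨i :: l', hsub.cons_cons i, by simp [hlen'], ?_⟩
      rw [wordProd_cons, hprod, wordProd_cons, mul_assoc]

lemma length_mul_srefl_lt {g : D.W} {β : D.V} (hβ : D.IsPosRoot β)
    (hneg : ¬ D.IsPosRoot (D.act g β)) : D.length (g * D.srefl β) < D.length g := by
  obtain ⟨l, hl⟩ := D.exists_isReduced g
  obtain ⟨l', -, hlen, hprod⟩ := D.exists_sublist_wordProd_eq_mul_srefl hl hβ hneg
  have := D.length_le_of_wordProd_eq hprod
  have := hl.2
  omega

lemma length_mul_s_lt_of_not_isPosRoot {g : D.W} {i : D.I}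
    (hneg : ¬ D.IsPosRoot (D.act g (D.simple i))) : D.length (g * D.s i) < D.length g :=
  D.length_mul_srefl_lt (D.isPosRoot_simple i) hneg

lemma isPosRoot_act_iff {g : D.W} {β : D.V} (hβ : D.IsPosRoot β) :
    D.IsPosRoot (D.act g β) ↔ D.length g < D.length (g * D.srefl β) := by
  refine ⟨fun hpos => ?_, fun h => by_contra fun hneg => ?_⟩
  · have hneg : ¬ D.IsPosRoot (D.act (g * D.srefl β) β) := by
      rw [act_mul, D.act_srefl_self hβ.1, map_neg]
      exact hpos.not_neg
    simpa [mul_assoc, D.srefl_mul_self hβ.1] using D.length_mul_srefl_lt hβ hneg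
  · exact (D.length_mul_srefl_lt hβ hneg).not_gt h

lemma isPosRoot_act_inv_iff {g : D.W} {β : D.V} (hβ : D.IsPosRoot β) :
    D.IsPosRoot (D.act g⁻¹ β) ↔ D.length g < D.length (D.srefl β * g) := by
  rw [D.isPosRoot_act_iff hβ, length_inv, ← D.length_inv (D.srefl β * g), mul_inv_rev,
    D.srefl_inv hβ.1]

lemma isPosRoot_act_simple_iff {g : D.W} {i : D.I} :
    D.IsPosRoot (D.act g (D.simple i)) ↔ D.length g < D.length (g * D.s i) :=
  D.isPosRoot_act_iff (D.isPosRoot_simple i)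

lemma isPosRoot_act_inv_simple_iff {g : D.W} {i : D.I} :
    D.IsPosRoot (D.act g⁻¹ (D.simple i)) ↔ D.length g < D.length (D.s i * g) :=
  D.isPosRoot_act_inv_iff (D.isPosRoot_simple i)

lemma length_s_mul (x : D.W) (i : D.I) :
    D.length (D.s i * x) = D.length x + 1 ∨ D.length (D.s i * x) + 1 = D.length x := by
  have h1 := D.length_s_mul_le i x
  have h2 := D.length_s_mul_le i (D.s i * x)
  rw [s_mul_s_mul] at h2
  have h3 : D.length (D.s i * x) ≠ D.length x := by
    rcases D.isPosRoot_or_isPosRoot_neg (D.act_mem_roots x⁻¹ (D.simple_mem i)) with h | h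
    · exact (D.isPosRoot_act_inv_simple_iff.mp h).ne'
    · have : D.IsPosRoot (D.act (D.s i * x)⁻¹ (D.simple i)) := by
        rwa [mul_inv_rev, s_inv, act_mul, s, D.act_srefl_self (D.simple_mem i), map_neg]
      simpa using (D.isPosRoot_act_inv_simple_iff.mp this).ne
  omega

lemma length_mul_s (x : D.W) (i : D.I) :
    D.length (x * D.s i) = D.length x + 1 ∨ D.length (x * D.s i) + 1 = D.length x := by
  have h := D.length_s_mul x⁻¹ i
  rwa [← D.length_inv (D.s i * x⁻¹), mul_inv_rev, inv_inv, s_inv, length_inv] at h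

end Exchange

section ReducedWords

lemma IsReduced.of_cons {i : D.I} {m : List D.I} {g : D.W} (h : D.IsReduced (i :: m) g) :
    D.IsReduced m (D.s i * g) := by
  obtain ⟨rfl, hlen⟩ := h
  refine ⟨by simp, le_antisymm ?_ (D.length_le_of_wordProd_eq (by simp))⟩
  have := D.length_s_mul_le i (D.s i * D.wordProd (i :: m))
  simp only [s_mul_s_mul, List.length_cons] at this hlen
  omega

variable {D} in
lemma IsReduced.cons {i : D.I} {m : List D.I} {g : D.W} (h : D.IsReduced m g)
    (hlt : D.length g < D.length (D.s i * g)) : D.IsReduced (i :: m) (D.s i * g) := by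
  refine ⟨by simp [h.1], ?_⟩
  have := D.length_s_mul_le i g
  simp only [List.length_cons, h.2]
  omega

lemma IsReduced.reverse {l : List D.I} {g : D.W} (h : D.IsReduced l g) :
    D.IsReduced l.reverse g⁻¹ :=
  ⟨by rw [wordProd_reverse, h.1], by simp [h.2]⟩

lemma exists_right_descent {x : D.W} (hx : x ≠ 1) :
    ∃ i, D.length (x * D.s i) < D.length x := by
  obtain ⟨l, hl⟩ := D.exists_isReduced x⁻¹
  cases l with
  | nil => exact absurd (inv_eq_one.mp hl.1.symm) hx
  | cons i m =>
    refine ⟨i, ?_⟩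
    have := hl.of_cons.2
    rw [← length_inv, mul_inv_rev, s_inv, ← D.length_inv x, ← hl.2]
    simp only [List.length_cons] at this ⊢
    omega

lemma exists_left_descent {x : D.W} (hx : x ≠ 1) :
    ∃ i, D.length (D.s i * x) < D.length x := by
  obtain ⟨i, hi⟩ := D.exists_right_descent (inv_ne_one.mpr hx)
  exact ⟨i, by simpa [← D.length_inv (D.s i * x)] using hi⟩

end ReducedWords

section Bruhat

lemma bruhatLE_refl (x : D.W) : D.bruhatLE x x := Relation.ReflTransGen.refl

lemma length_le_of_bruhatLE {a b : D.W} (h : D.bruhatLE a b) : D.length a ≤ D.length b := by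
  induction h with
  | refl => rfl
  | tail _ step ih => exact ih.trans step.2.le

lemma eq_of_bruhatLE_of_length_le {a b : D.W} (h : D.bruhatLE a b)
    (hl : D.length b ≤ D.length a) : a = b := by
  rcases h.cases_tail with rfl | ⟨c, hac, step⟩
  · rfl
  · linarith [D.length_le_of_bruhatLE hac, step.2]

lemma bruhatLE_srefl_mul {a : D.W} {β : D.V} (hβ : β ∈ D.roots)
    (hlen : D.length a < D.length (D.srefl β * a)) : D.bruhatLE a (D.srefl β * a) := by
  rcases D.isPosRoot_or_isPosRoot_neg hβ with hpos | hpos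
  · exact .single ⟨⟨β, hpos, rfl⟩, hlen⟩
  · have hs : D.srefl (-β) = D.srefl β := by
      simpa using D.srefl_smul hβ (c := -1) (by norm_num) (by simpa using D.roots_neg β hβ)
    exact .single ⟨⟨-β, hpos, by rw [hs]⟩, hlen⟩

lemma bruhatLE_mul_srefl {a : D.W} {β : D.V} (hβ : β ∈ D.roots)
    (hlen : D.length a < D.length (a * D.srefl β)) : D.bruhatLE a (a * D.srefl β) := by
  rw [D.mul_srefl a hβ] at hlen ⊢
  exact D.bruhatLE_srefl_mul (D.act_mem_roots a hβ) hlen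

lemma bruhatLE_s_mul {a : D.W} {i : D.I} (hlen : D.length a < D.length (D.s i * a)) :
    D.bruhatLE a (D.s i * a) :=
  D.bruhatLE_srefl_mul (D.simple_mem i) hlen

lemma s_mul_bruhatLE {a : D.W} {i : D.I} (hlen : D.length (D.s i * a) < D.length a) :
    D.bruhatLE (D.s i * a) a := by
  simpa using D.bruhatLE_s_mul (a := D.s i * a) (i := i) (by simpa using hlen)

variable {D} in
lemma bruhatLE.inv {a b : D.W} (h : D.bruhatLE a b) : D.bruhatLE a⁻¹ b⁻¹ := by
  induction h with
  | refl => exact D.bruhatLE_refl _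
  | tail _ hxy ih =>
    obtain ⟨⟨β, hβ, rfl⟩, hlen⟩ := hxy
    rw [mul_inv_rev, D.srefl_inv hβ.1]
    refine ih.trans (D.bruhatLE_mul_srefl hβ.1 ?_)
    rwa [← D.length_inv (_ * _), mul_inv_rev, inv_inv, D.srefl_inv hβ.1, length_inv]

end Bruhat

section WeakOrder

lemma weakLE_refl (x : D.W) : D.weakLE x x := by
  simp [weakLE]

lemma weakLE_trans {a b c : D.W} (h1 : D.weakLE a b) (h2 : D.weakLE b c) : D.weakLE a c := by
  unfold weakLE at *
  have le1 := D.length_mul_le (c * b⁻¹) (b * a⁻¹)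
  have le2 := D.length_mul_le (c * a⁻¹) a
  simp only [mul_assoc, inv_mul_cancel_left, inv_mul_cancel, mul_one] at le1 le2
  omega

lemma s_mul_weakLE {w : D.W} {i : D.I} (h : D.length (D.s i * w) < D.length w) :
    D.weakLE (D.s i * w) w := by
  have h1 := D.length_mul_le (D.s i) (D.s i * w)
  rw [s_mul_s_mul] at h1
  have h2 := D.length_s_le i
  simp only [weakLE, mul_inv_rev, s_inv, mul_inv_cancel_left]
  omega

lemma bruhatLE_wordProd_mul {l : List D.I} {a : D.W}
    (h : D.length (D.wordProd l * a) = l.length + D.length a) :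
    D.bruhatLE a (D.wordProd l * a) := by
  induction l generalizing a with
  | nil => simpa using D.bruhatLE_refl a
  | cons i m ih =>
    have h1 := D.length_mul_le (D.wordProd m) a
    have h2 := D.length_le_of_wordProd_eq (l := m) rfl
    have h3 := D.length_s_mul_le i (D.wordProd m * a)
    simp only [wordProd_cons, List.length_cons, mul_assoc] at h h3 ⊢
    exact (ih (by omega)).trans (D.bruhatLE_s_mul (by omega))

variable {D} in
lemma weakLE.bruhatLE {a b : D.W} (h : D.weakLE a b) : D.bruhatLE a b := by
  obtain ⟨l, hl, hlen⟩ := D.exists_isReduced (b * a⁻¹)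
  have hb : D.wordProd l * a = b := by rw [hl]; group
  rw [← hb]
  exact D.bruhatLE_wordProd_mul (by rw [hb, hlen]; exact h.symm)

end WeakOrder

section Subword

lemma exists_sublist_wordProd_eq_srefl_mul {l : List D.I} {g : D.W} (hl : D.IsReduced l g)
    {β : D.V} (hβ : D.IsPosRoot β) (hneg : ¬ D.IsPosRoot (D.act g⁻¹ β)) :
    ∃ l', l'.Sublist l ∧ l'.length + 1 = l.length ∧ D.wordProd l' = D.srefl β * g := by
  obtain ⟨l', hsub, hlen, hprod⟩ := D.exists_sublist_wordProd_eq_mul_srefl hl.reverse hβ hneg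
  refine ⟨l'.reverse, by simpa using hsub.reverse, by simpa using hlen, ?_⟩
  rw [wordProd_reverse, hprod, mul_inv_rev, inv_inv, D.srefl_inv hβ.1]

lemma exists_sublist_isReduced (l : List D.I) :
    ∃ l', l'.Sublist l ∧ D.IsReduced l' (D.wordProd l) := by
  generalize hn : l.length = n
  induction n using Nat.strong_induction_on generalizing l with
  | _ n ih =>
  cases l with
  | nil => exact ⟨[], .refl _, rfl, by simp⟩
  | cons i m =>
    subst hn
    obtain ⟨m', hsub, hprod', hlen'⟩ := ih m.length (by simp) m rfl
    have hm' : D.IsReduced m' (D.wordProd m') := ⟨rfl, hlen'.trans (by rw [hprod'])⟩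
    rw [wordProd_cons, ← hprod']
    by_cases hpos : D.IsPosRoot (D.act (D.wordProd m')⁻¹ (D.simple i))
    · exact ⟨i :: m', hsub.cons_cons i, hm'.cons (D.isPosRoot_act_inv_simple_iff.mp hpos)⟩
    · obtain ⟨m'', hsub', -, hprod⟩ :=
        D.exists_sublist_wordProd_eq_srefl_mul hm' (D.isPosRoot_simple i) hpos
      have : m''.length < (i :: m).length := by
        have := hsub'.length_le
        have := hsub.length_le
        simp only [List.length_cons]
        omega
      obtain ⟨l', hsub'', hl'⟩ := ih m''.length this m'' rfl
      exact ⟨l', ((hsub''.trans hsub').trans hsub).cons i, by rwa [s, ← hprod]⟩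

/-- One direction of the subword property. -/
theorem exists_sublist_isReduced_of_bruhatLE {v w : D.W} (h : D.bruhatLE v w) {l : List D.I}
    (hl : D.IsReduced l w) : ∃ l', l'.Sublist l ∧ D.IsReduced l' v := by
  induction h generalizing l with
  | refl => exact ⟨l, .refl _, hl⟩
  | @tail x _ _ hxy ih =>
    obtain ⟨⟨β, hβ, rfl⟩, hlen⟩ := hxy
    have hneg : ¬ D.IsPosRoot (D.act (D.srefl β * x)⁻¹ β) := by
      rw [D.isPosRoot_act_inv_iff hβ, ← mul_assoc, D.srefl_mul_self hβ.1, one_mul]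
      exact hlen.not_gt
    obtain ⟨l', hsub, -, hprod⟩ := D.exists_sublist_wordProd_eq_srefl_mul hl hβ hneg
    rw [← mul_assoc, D.srefl_mul_self hβ.1, one_mul] at hprod
    obtain ⟨l'', hsub', hl''⟩ := D.exists_sublist_isReduced l'
    obtain ⟨l''', hsub'', hl'''⟩ := ih (hprod ▸ hl'')
    exact ⟨l''', (hsub''.trans hsub').trans hsub, hl'''⟩

def SubwordLE (n : ℕ) : Prop :=
  ∀ l g, D.IsReduced l g → l.length ≤ n → ∀ l', l'.Sublist l → D.bruhatLE (D.wordProd l') g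

def SMulMono (n : ℕ) : Prop :=
  ∀ x, D.length x ≤ n → ∀ i y, D.length x < D.length (D.s i * x) → D.bruhatLE y x →
    D.bruhatLE (D.s i * y) (D.s i * x)

lemma bruhatLE_lift_of_subwordLE {n : ℕ} (hP : D.SubwordLE n) {w v : D.W} {i : D.I}
    (hn : D.length (D.s i * w) ≤ n) (hdesc : D.length (D.s i * w) < D.length w)
    (hvw : D.bruhatLE v w) :
    D.bruhatLE v (D.s i * w) ∨
      (D.length (D.s i * v) < D.length v ∧ D.bruhatLE (D.s i * v) (D.s i * w)) := by
  obtain ⟨m, hm⟩ := D.exists_isReduced (D.s i * w)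
  have hw : D.IsReduced (i :: m) w := by
    simpa using hm.cons (i := i) (by simpa using hdesc)
  obtain ⟨l', hsub, hl'⟩ := D.exists_sublist_isReduced_of_bruhatLE hvw hw
  cases hsub with
  | cons _ hsub => exact .inl (hl'.1 ▸ hP m _ hm (hm.2 ▸ hn) l' hsub)
  | @cons_cons r _ _ hsub =>
    have hr := hl'.of_cons
    refine .inr ⟨?_, hr.1 ▸ hP m _ hm (hm.2 ▸ hn) r hsub⟩
    have := hl'.2
    have := hr.2
    simp only [List.length_cons] at *
    omega

lemma subwordLE_zero : D.SubwordLE 0 := by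
  intro l g hl hlen l' hsub
  obtain rfl := List.length_eq_zero_iff.mp (Nat.le_zero.mp hlen)
  obtain rfl := List.sublist_nil.mp hsub
  exact hl.1 ▸ D.bruhatLE_refl _

lemma sMulMono_zero : D.SMulMono 0 := by
  intro x hx i y _ hyx
  obtain rfl := D.eq_one_of_length_eq_zero (Nat.le_zero.mp hx)
  have := D.length_le_of_bruhatLE hyx
  rw [length_one] at this
  obtain rfl := D.eq_one_of_length_eq_zero (Nat.le_zero.mp this)
  exact D.bruhatLE_refl _

lemma subwordLE_succ {n : ℕ} (hP : D.SubwordLE n) (hQ : D.SMulMono n) :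
    D.SubwordLE (n + 1) := by
  intro l g hl hlen l' hsub
  cases l with
  | nil => exact D.subwordLE_zero [] g hl le_rfl l' hsub
  | cons i m =>
    have hm := hl.of_cons
    have hlen' : D.length (D.s i * g) ≤ n := by
      have := hm.2
      simp only [List.length_cons] at hlen
      omega
    have hdesc : D.length (D.s i * g) < D.length g := by
      have := hl.2
      have := hm.2
      simp only [List.length_cons] at *
      omega
    cases hsub with
    | cons _ hsub => exact (hP m _ hm (hm.2 ▸ hlen') l' hsub).trans (D.s_mul_bruhatLE hdesc)
    | @cons_cons r _ _ hsub =>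
      simpa using hQ (D.s i * g) hlen' i _ (by simpa using hdesc)
        (hP m _ hm (hm.2 ▸ hlen') r hsub)

lemma sMulMono_succ {n : ℕ} (hP : D.SubwordLE n) (hQ : D.SMulMono n) :
    D.SMulMono (n + 1) := by
  intro x hx i y hup hyx
  rcases hyx.cases_tail with rfl | ⟨x', hyx', ⟨β, hβ, rfl⟩, hlt⟩
  · exact D.bruhatLE_refl _
  have hx' : D.length x' ≤ n := by omega
  have hx'x : D.bruhatLE x' (D.s i * (D.srefl β * x')) :=
    (Relation.ReflTransGen.single ⟨⟨β, hβ, rfl⟩, hlt⟩).trans (D.bruhatLE_s_mul hup)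
  rcases D.length_s_mul x' i with hup' | hdown'
  · refine (hQ x' hx' i y (by omega) hyx').trans ?_
    rw [← mul_assoc, D.mul_srefl _ hβ.1, mul_assoc]
    refine D.bruhatLE_srefl_mul (D.act_mem_roots _ hβ.1) ?_
    rw [← mul_assoc, ← D.mul_srefl _ hβ.1, mul_assoc]
    omega
  · rcases D.bruhatLE_lift_of_subwordLE hP (i := i) (by omega) (by omega) hyx' with hy | ⟨-, hy⟩
    · have := hQ (D.s i * x') (by omega) i y (by simp; omega) hy
      exact (by simpa using this : D.bruhatLE (D.s i * y) x').trans hx'x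
    · exact hy.trans ((D.s_mul_bruhatLE (by omega)).trans hx'x)

lemma subwordLE_and_sMulMono (n : ℕ) : D.SubwordLE n ∧ D.SMulMono n := by
  induction n with
  | zero => exact ⟨D.subwordLE_zero, D.sMulMono_zero⟩
  | succ n ih => exact ⟨D.subwordLE_succ ih.1 ih.2, D.sMulMono_succ ih.1 ih.2⟩

lemma s_mul_bruhatLE_s_mul {x y : D.W} {i : D.I} (hup : D.length x < D.length (D.s i * x))
    (h : D.bruhatLE y x) : D.bruhatLE (D.s i * y) (D.s i * x) :=
  (D.subwordLE_and_sMulMono _).2 x le_rfl i y hup h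

/-- The lifting property of the Bruhat order. -/
lemma bruhatLE_lift {w v : D.W} {i : D.I} (hdesc : D.length (D.s i * w) < D.length w)
    (h : D.bruhatLE v w) :
    D.bruhatLE v (D.s i * w) ∨
      (D.length (D.s i * v) < D.length v ∧ D.bruhatLE (D.s i * v) (D.s i * w)) :=
  D.bruhatLE_lift_of_subwordLE (D.subwordLE_and_sMulMono _).1 le_rfl hdesc h

lemma bruhatLE_lift_right {w v : D.W} {i : D.I} (hdesc : D.length (w * D.s i) < D.length w)
    (h : D.bruhatLE v w) :
    D.bruhatLE v (w * D.s i) ∨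
      (D.length (v * D.s i) < D.length v ∧ D.bruhatLE (v * D.s i) (w * D.s i)) := by
  have e (z : D.W) : D.s i * z⁻¹ = (z * D.s i)⁻¹ := by rw [mul_inv_rev, s_inv]
  have hdesc' : D.length (D.s i * w⁻¹) < D.length w⁻¹ := by
    rwa [e, length_inv, length_inv]
  rcases D.bruhatLE_lift hdesc' h.inv with h1 | ⟨h2, h3⟩
  · rw [e] at h1
    simpa using Or.inl h1.inv
  · rw [e, e] at h3
    rw [e, length_inv, length_inv] at h2
    exact .inr ⟨h2, by simpa using h3.inv⟩

end Subword

section Dominant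

variable {D} {pi : D.V}

lemma form_simple_nonneg (hpi : D.IsDominant pi) (i : D.I) : 0 ≤ D.form (D.simple i) pi := by
  nlinarith [D.coroot_mul_form (D.simple_mem i) pi, hpi.2 i, D.form_self_pos (D.simple_mem i)]

lemma IsPosRoot.form_eq_sum {δ : D.V} (hδ : D.IsPosRoot δ) (v : D.V) :
    D.form δ v = ∑ i, (D.posCoeff δ i : ℚ) * D.form (D.simple i) v := by
  conv_lhs => rw [hδ.eq_sum_posCoeff]
  simp

lemma coroot_nonneg_of_isDominant (hpi : D.IsDominant pi) {δ : D.V} (hδ : D.IsPosRoot δ) :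
    0 ≤ D.coroot δ pi := by
  have : 0 ≤ D.form δ pi := by
    rw [hδ.form_eq_sum]
    exact Finset.sum_nonneg fun i _ => mul_nonneg (Nat.cast_nonneg _) (form_simple_nonneg hpi i)
  nlinarith [D.coroot_mul_form hδ.1 pi, D.form_self_pos hδ.1]

lemma coroot_simple_eq_zero_of_posCoeff_ne_zero (hpi : D.IsDominant pi) {δ : D.V}
    (hδ : D.IsPosRoot δ) (h0 : D.coroot δ pi = 0) {j : D.I} (hj : D.posCoeff δ j ≠ 0) :
    D.coroot (D.simple j) pi = 0 := by
  have hform : D.form δ pi = 0 := by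
    have := D.coroot_mul_form hδ.1 pi
    rw [h0, zero_mul] at this
    linarith
  rw [hδ.form_eq_sum] at hform
  have hterm := (Finset.sum_eq_zero_iff_of_nonneg fun i _ =>
    mul_nonneg (Nat.cast_nonneg _) (form_simple_nonneg hpi i)).mp hform j (Finset.mem_univ j)
  have hf : D.form (D.simple j) pi = 0 :=
    (mul_eq_zero.mp hterm).resolve_left (by exact_mod_cast hj)
  have := D.coroot_mul_form (D.simple_mem j) pi
  rw [hf, mul_zero] at this
  exact (mul_eq_zero.mp this).resolve_right (D.form_self_pos (D.simple_mem j)).ne'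

/-- Compare heights: `ht(xδ) ≥ ht(δ) ≥ 1`. -/
lemma isPosRoot_act_of_coroot_eq_zero (hpi : D.IsDominant pi) {x : D.W}
    (hx : ∀ j, D.coroot (D.simple j) pi = 0 → D.IsPosRoot (D.act x (D.simple j)))
    {δ : D.V} (hδ : D.IsPosRoot δ) (h0 : D.coroot δ pi = 0) : D.IsPosRoot (D.act x δ) := by
  have hterm (j : D.I) :
      (D.posCoeff δ j : ℚ) ≤ D.posCoeff δ j * D.height (D.act x (D.simple j)) := by
    by_cases hj : D.posCoeff δ j = 0
    · simp [hj]
    · exact le_mul_of_one_le_right (Nat.cast_nonneg _)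
        (hx j (coroot_simple_eq_zero_of_posCoeff_ne_zero hpi hδ h0 hj)).one_le_height
  have hge : D.height δ ≤ D.height (D.act x δ) := by
    conv_rhs => rw [hδ.eq_sum_posCoeff]
    rw [hδ.height_eq]
    push_cast
    simpa using Finset.sum_le_sum fun j _ => hterm j
  by_contra hneg
  have := (D.isPosRoot_neg_of_not (D.act_mem_roots x hδ.1) hneg).one_le_height
  rw [map_neg] at this
  linarith [hδ.one_le_height]

end Dominant

section Parabolic

variable {D} {pi : D.V}

lemma srefl_mem_stab {β : D.V} (hβ : β ∈ D.roots) (h0 : D.coroot β pi = 0) :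
    D.srefl β ∈ D.stab pi := by
  change D.act _ pi = pi
  rw [D.srefl_apply β hβ, h0, zero_smul, sub_zero]

lemma s_mem_stab {j : D.I} (h0 : D.coroot (D.simple j) pi = 0) : D.s j ∈ D.stab pi :=
  srefl_mem_stab (D.simple_mem j) h0

lemma act_eq_of_mem_stab {h : D.W} (hh : h ∈ D.stab pi) : D.act h pi = pi := hh

lemma coroot_simple_eq_zero_of_mem_stab (hpi : D.IsDominant pi) {h : D.W}
    (hh : h ∈ D.stab pi) {k : D.I} (hk : D.length (h * D.s k) < D.length h) :
    D.coroot (D.simple k) pi = 0 := by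
  have hneg : ¬ D.IsPosRoot (D.act h (D.simple k)) := fun hpos =>
    (D.isPosRoot_act_simple_iff.mp hpos).not_gt hk
  have := coroot_nonneg_of_isDominant hpi
    (D.isPosRoot_neg_of_not (D.act_mem_roots h (D.simple_mem k)) hneg)
  rw [D.coroot_neg (D.act_mem_roots h (D.simple_mem k)), D.coroot_act (D.simple_mem k),
    act_eq_of_mem_stab (inv_mem hh)] at this
  linarith [hpi.2 k]

lemma length_mul_of_mem_stab (hpi : D.IsDominant pi) {x : D.W}
    (hx : ∀ j, D.coroot (D.simple j) pi = 0 → D.IsPosRoot (D.act x (D.simple j)))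
    {h : D.W} (hh : h ∈ D.stab pi) : D.length (x * h) = D.length x + D.length h := by
  generalize hn : D.length h = n
  induction n using Nat.strong_induction_on generalizing h with
  | _ n ih =>
  by_cases h1 : h = 1
  · subst h1
    simp [← hn]
  obtain ⟨k, hk⟩ := D.exists_right_descent h1
  have hk0 := coroot_simple_eq_zero_of_mem_stab hpi hh hk
  have hh' : h * D.s k ∈ D.stab pi := mul_mem hh (s_mem_stab hk0)
  have hdown : D.length (h * D.s k) + 1 = D.length h := by
    rcases D.length_mul_s h k with h' | h' <;> omega
  have ih' := ih _ (by omega) hh' rfl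
  have hδ : D.IsPosRoot (D.act (h * D.s k) (D.simple k)) :=
    D.isPosRoot_act_simple_iff.mpr (by simp; omega)
  have hδ0 : D.coroot (D.act (h * D.s k) (D.simple k)) pi = 0 := by
    rw [D.coroot_act (D.simple_mem k), act_eq_of_mem_stab (inv_mem hh'), hk0]
  have hup := (D.isPosRoot_act_simple_iff (g := x * (h * D.s k)) (i := k)).mp
    (by rw [act_mul]; exact isPosRoot_act_of_coroot_eq_zero hpi hx hδ hδ0)
  have := D.length_mul_s_le k (x * (h * D.s k))
  simp only [← mul_assoc, mul_s_mul_s] at hup this ih'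
  omega

lemma isMinRep_iff (hpi : D.IsDominant pi) {x : D.W} :
    D.IsMinRep (D.stab pi) x ↔
      ∀ j, D.coroot (D.simple j) pi = 0 → D.IsPosRoot (D.act x (D.simple j)) := by
  refine ⟨fun hx j hj => by_contra fun hneg => ?_, fun hx g hg => ?_⟩
  · have := hx (x * D.s j) (by simpa using s_mem_stab hj)
    exact (D.length_mul_s_lt_of_not_isPosRoot hneg).not_ge this
  · have := length_mul_of_mem_stab hpi hx hg
    rw [mul_inv_cancel_left] at this
    omega

lemma IsMinRep.eq (hpi : D.IsDominant pi) {x y : D.W} (hx : D.IsMinRep (D.stab pi) x)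
    (hy : D.IsMinRep (D.stab pi) y) (hxy : x⁻¹ * y ∈ D.stab pi) : x = y := by
  have h1 := length_mul_of_mem_stab hpi ((isMinRep_iff hpi).mp hx) hxy
  have h2 := hy x (by simpa using inv_mem hxy)
  rw [mul_inv_cancel_left] at h1
  have := D.eq_one_of_length_eq_zero (by omega : D.length (x⁻¹ * y) = 0)
  exact inv_mul_eq_one.mp this

lemma IsMinRep.s_mul {x : D.W} {i : D.I} (hx : D.IsMinRep (D.stab pi) x)
    (hlt : D.length (D.s i * x) < D.length x) : D.IsMinRep (D.stab pi) (D.s i * x) := by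
  intro g hg
  have h1 := hx (D.s i * g) (by simpa [mul_assoc] using hg)
  have := D.length_s_mul_le i g
  have := D.length_s_mul x i
  omega

lemma IsMinRep.bruhatLE_of_bruhatLE (hpi : D.IsDominant pi) {y x z : D.W}
    (hy : D.IsMinRep (D.stab pi) y) (hyx : D.bruhatLE y x) (hxz : x⁻¹ * z ∈ D.stab pi)
    (hz : D.IsMinRep (D.stab pi) z) : D.bruhatLE y z := by
  generalize hn : D.length x = n
  induction n using Nat.strong_induction_on generalizing x with
  | _ n ih =>
  by_cases hx : ∀ j, D.coroot (D.simple j) pi = 0 → D.IsPosRoot (D.act x (D.simple j))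
  · exact IsMinRep.eq hpi ((isMinRep_iff hpi).mpr hx) hz hxz ▸ hyx
  push Not at hx
  obtain ⟨j, hj0, hjneg⟩ := hx
  have hlt := D.length_mul_s_lt_of_not_isPosRoot hjneg
  rcases D.bruhatLE_lift_right hlt hyx with h1 | ⟨h2, -⟩
  · exact ih _ (by omega) h1 (by simpa [mul_assoc] using mul_mem (s_mem_stab hj0) hxz) rfl
  · exact absurd (hy (y * D.s j) (by simpa using s_mem_stab hj0)) (by omega)

end Parabolic

section Depth

variable {D} {pi : D.V}

variable (D) in
noncomputable def depth (pi : D.V) (x : D.W) : ℚ := D.height (pi - D.act x pi)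

lemma depth_srefl_mul {β : D.V} (hβ : β ∈ D.roots) (x : D.W) :
    D.depth pi (D.srefl β * x) = D.depth pi x + D.coroot β (D.act x pi) * D.height β := by
  rw [depth, depth, act_mul, D.srefl_apply β hβ, sub_sub_eq_add_sub, add_sub_right_comm,
    map_add, map_smul, smul_eq_mul, add_comm (D.height _)]

lemma depth_s_mul (i : D.I) (x : D.W) :
    D.depth pi (D.s i * x) = D.depth pi x + D.coroot (D.simple i) (D.act x pi) := by
  rw [s, depth_srefl_mul (D.simple_mem i), height_simple, mul_one]

lemma depth_wordProd (l : List D.I) :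
    D.depth pi (D.wordProd l) = ∑ k : Fin l.length,
      D.coroot (D.simple (l.get k)) (D.act (D.wordProd (l.drop (k.val + 1))) pi) := by
  induction l with
  | nil => simp [depth]
  | cons i m ih => simp [depth_s_mul, ih, Fin.sum_univ_succ, add_comm]

lemma IsMinuscule.depth_eq {w : D.W} (hw : D.IsMinuscule pi w) :
    D.depth pi w = D.length w := by
  obtain ⟨l, ⟨rfl, hlen⟩, hone⟩ := hw
  rw [depth_wordProd, Finset.sum_congr rfl fun k _ => hone k]
  simp [hlen]

/-- The integer `⟨xπ, β∨⟩` is nonnegative by dominance, and zero would put `s_β x` in the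
coset `x W_P`. -/
lemma one_le_coroot_act (hpi : D.IsDominant pi) {x : D.W} {β : D.V} (hβ : D.IsPosRoot β)
    (hmin : D.IsMinRep (D.stab pi) (D.srefl β * x))
    (hlt : D.length x < D.length (D.srefl β * x)) : 1 ≤ D.coroot β (D.act x pi) := by
  have hδ : D.IsPosRoot (D.act x⁻¹ β) := (D.isPosRoot_act_inv_iff hβ).mpr hlt
  have e : D.coroot β (D.act x pi) = D.coroot (D.act x⁻¹ β) pi := by
    rw [D.coroot_act hβ.1, inv_inv]
  rw [e]
  obtain ⟨n, hn⟩ := hpi.1 _ hδ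
  have h0 : 0 ≤ n := by exact_mod_cast hn ▸ coroot_nonneg_of_isDominant hpi hδ
  have hn0 : n ≠ 0 := by
    rintro rfl
    have hstab : (D.srefl β * x)⁻¹ * x ∈ D.stab pi := by
      change D.act _ pi = pi
      rw [mul_inv_rev, D.srefl_inv hβ.1, mul_assoc, act_mul, act_mul, D.srefl_apply β hβ.1, e,
        hn, Int.cast_zero, zero_smul, sub_zero, act_inv_act]
    exact (hmin x hstab).not_gt hlt
  rw [hn]
  exact_mod_cast (by omega : 1 ≤ n)

lemma IsMinRep.one_le_coroot_s_mul (hpi : D.IsDominant pi) {x : D.W} {i : D.I}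
    (hx : D.IsMinRep (D.stab pi) x) (hi : D.length (D.s i * x) < D.length x) :
    1 ≤ D.coroot (D.simple i) (D.act (D.s i * x) pi) := by
  have e : D.srefl (D.simple i) * (D.s i * x) = x := D.s_mul_s_mul i x
  exact one_le_coroot_act hpi (D.isPosRoot_simple i) (by rwa [e]) (by rwa [e])

lemma IsMinRep.length_le_depth (hpi : D.IsDominant pi) {x : D.W}
    (hx : D.IsMinRep (D.stab pi) x) : (D.length x : ℚ) ≤ D.depth pi x := by
  generalize hn : D.length x = n
  induction n using Nat.strong_induction_on generalizing x with
  | _ n ih =>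
  by_cases h1 : x = 1
  · subst h1
    simp [← hn, depth]
  obtain ⟨i, hi⟩ := D.exists_left_descent h1
  have hdown : D.length (D.s i * x) + 1 = D.length x := by
    rcases D.length_s_mul x i with h | h <;> omega
  have hc := hx.one_le_coroot_s_mul hpi hi
  have := ih _ (by omega) (hx.s_mul hi) rfl
  have e := depth_s_mul (pi := pi) i (D.s i * x)
  rw [s_mul_s_mul] at e
  rw [e, ← hn, ← hdown]
  push_cast
  linarith

lemma depth_s_mul_eq_length (hpi : D.IsDominant pi) {w : D.W} (hw : D.IsMinRep (D.stab pi) w)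
    (hgw : D.depth pi w = D.length w) {i : D.I} (hi : D.length (D.s i * w) < D.length w) :
    D.depth pi (D.s i * w) = D.length (D.s i * w) := by
  have hdown : D.length (D.s i * w) + 1 = D.length w := by
    rcases D.length_s_mul w i with h | h <;> omega
  have hc := hw.one_le_coroot_s_mul hpi hi
  have hge := (hw.s_mul hi).length_le_depth hpi
  have e := depth_s_mul (pi := pi) i (D.s i * w)
  rw [s_mul_s_mul, hgw, ← hdown] at e
  push_cast at e
  linarith

end Depth

section Interval

variable {D} {pi : D.V}

lemma inv_mul_mem_stab_of_not_isMinRep_s_mul (hpi : D.IsDominant pi) {z : D.W} {i : D.I}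
    (hz : D.IsMinRep (D.stab pi) z) (hnot : ¬ D.IsMinRep (D.stab pi) (D.s i * z)) :
    (D.s i * z)⁻¹ * z ∈ D.stab pi := by
  obtain ⟨k, hk0, hkneg⟩ : ∃ k, D.coroot (D.simple k) pi = 0 ∧
      ¬ D.IsPosRoot (D.act (D.s i * z) (D.simple k)) := by
    simpa [isMinRep_iff hpi] using hnot
  obtain ⟨c, hc, hrep⟩ := D.eq_smul_simple_of_not_isPosRoot_act_s
    ((isMinRep_iff hpi).mp hz k hk0) (by rwa [← act_mul])
  have hαi : D.act z⁻¹ (D.simple i) = c⁻¹ • D.simple k := by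
    rw [← inv_smul_smul₀ hc.ne' (D.simple i), ← hrep, map_smul, act_inv_act]
  have hroot : c⁻¹ • D.simple k ∈ D.roots := hαi ▸ D.act_mem_roots z⁻¹ (D.simple_mem i)
  have e : (D.s i * z)⁻¹ * z = D.srefl (D.act z⁻¹ (D.simple i)) := by
    rw [← D.srefl_conj z⁻¹ (D.simple_mem i), inv_inv, mul_inv_rev, s_inv, s]
  rw [e, hαi, D.srefl_smul (D.simple_mem k) (inv_ne_zero hc.ne') hroot]
  exact s_mem_stab hk0

/-- The Bruhat order on `W^P` is graded. -/
lemma exists_isMinRep_between (hpi : D.IsDominant pi) {v w : D.W}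
    (hv : D.IsMinRep (D.stab pi) v) (hw : D.IsMinRep (D.stab pi) w) (hvw : D.bruhatLE v w)
    (hne : v ≠ w) :
    ∃ z, D.IsMinRep (D.stab pi) z ∧ D.bruhatLE v z ∧ D.bruhatLE z w ∧
      D.length z + 1 = D.length w := by
  generalize hn : D.length w = n
  induction n using Nat.strong_induction_on generalizing v w with
  | _ n ih =>
  subst hn
  have hlt : D.length v < D.length w := lt_of_le_of_ne (D.length_le_of_bruhatLE hvw)
    fun h => hne (D.eq_of_bruhatLE_of_length_le hvw h.ge)
  obtain ⟨i, hi⟩ := D.exists_left_descent (x := w) (by rintro rfl; simp at hlt)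
  have hdown : D.length (D.s i * w) + 1 = D.length w := by
    rcases D.length_s_mul w i with h | h <;> omega
  by_cases hvw' : D.bruhatLE v (D.s i * w)
  · exact ⟨D.s i * w, hw.s_mul hi, hvw', D.s_mul_bruhatLE hi, hdown⟩
  obtain ⟨hvi, hvle⟩ := (D.bruhatLE_lift hi hvw).resolve_left hvw'
  obtain ⟨z, hz, hvz, hzw, hzlen⟩ := ih _ (by omega) (hv.s_mul hvi) (hw.s_mul hi) hvle
    (fun h => hne (by simpa using congrArg (D.s i * ·) h)) rfl
  rcases D.length_s_mul z i with hup | hdown'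
  · have hvsz : D.bruhatLE v (D.s i * z) := by
      simpa using D.s_mul_bruhatLE_s_mul (i := i) (by omega) hvz
    by_cases hzm : D.IsMinRep (D.stab pi) (D.s i * z)
    · refine ⟨D.s i * z, hzm, hvsz, ?_, by omega⟩
      simpa using D.s_mul_bruhatLE_s_mul (x := D.s i * w) (i := i) (by simp; omega) hzw
    · exact absurd ((hv.bruhatLE_of_bruhatLE hpi hvsz
        (inv_mul_mem_stab_of_not_isMinRep_s_mul hpi hz hzm) hz).trans hzw) hvw'
  · rcases D.bruhatLE_lift (i := i) (by omega) hvz with h | ⟨h, -⟩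
    · have := D.s_mul_bruhatLE_s_mul (x := D.s i * z) (i := i) (by simp; omega) h
      exact absurd ((by simpa using this : D.bruhatLE v z).trans hzw) hvw'
    · simp only [s_mul_s_mul] at h
      omega

lemma exists_left_descent_bruhatLE (hpi : D.IsDominant pi) {v w : D.W}
    (hv : D.IsMinRep (D.stab pi) v) (hw : D.IsMinRep (D.stab pi) w)
    (hgw : D.depth pi w = D.length w) (hvw : D.bruhatLE v w) (hne : v ≠ w) :
    ∃ i, D.length (D.s i * w) < D.length w ∧ D.bruhatLE v (D.s i * w) := by
  obtain ⟨z, hz, hvz, hzw, hzlen⟩ := exists_isMinRep_between hpi hv hw hvw hne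
  obtain ⟨γ, hγ, rfl⟩ : ∃ γ, D.IsPosRoot γ ∧ w = D.srefl γ * z := by
    rcases hzw.cases_tail with rfl | ⟨x, hzx, ⟨γ, hγ, rfl⟩, hlt⟩
    · omega
    · obtain rfl : z = x := D.eq_of_bruhatLE_of_length_le hzx (by omega)
      exact ⟨γ, hγ, rfl⟩
  have hc := one_le_coroot_act hpi hγ hw (by omega)
  have hge := hz.length_le_depth hpi
  rw [depth_srefl_mul hγ.1, ← hzlen] at hgw
  push_cast at hgw
  have hht : D.height γ = 1 := le_antisymm
    (by nlinarith [mul_nonneg (sub_nonneg.mpr hc) (sub_nonneg.mpr hγ.one_le_height)])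
    hγ.one_le_height
  obtain ⟨i, rfl⟩ := hγ.exists_eq_simple_of_height_eq_one hht
  refine ⟨i, ?_, ?_⟩ <;> rw [show D.s i * (D.srefl (D.simple i) * z) = z from D.s_mul_s_mul i z]
  · omega
  · exact hvz

theorem depth_eq_length_and_weakLE (hpi : D.IsDominant pi) {v w : D.W}
    (hv : D.IsMinRep (D.stab pi) v) (hw : D.IsMinRep (D.stab pi) w)
    (hgw : D.depth pi w = D.length w) (hvw : D.bruhatLE v w) :
    D.depth pi v = D.length v ∧ D.weakLE v w := by
  generalize hn : D.length w = n
  induction n using Nat.strong_induction_on generalizing w with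
  | _ n ih =>
  by_cases hne : v = w
  · subst hne
    exact ⟨hgw, D.weakLE_refl v⟩
  obtain ⟨i, hi, hvw'⟩ := exists_left_descent_bruhatLE hpi hv hw hgw hvw hne
  obtain ⟨hgv, hweak⟩ := ih _ (by omega) (hw.s_mul hi) (depth_s_mul_eq_length hpi hw hgw hi)
    hvw' rfl
  exact ⟨hgv, D.weakLE_trans hweak (D.s_mul_weakLE hi)⟩

end Interval

end WeylSetting

theorem weak_eq_strong_interval_general
    (D : WeylSetting) (pi : D.V) (hpi : D.IsDominant pi)
    (u w : D.W) (hw : D.IsMinuscule pi w)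
    (hur : D.IsMinRep (D.stab pi) u) (hwr : D.IsMinRep (D.stab pi) w) :
    {v : D.W | D.IsMinRep (D.stab pi) v ∧ D.bruhatLE u v ∧ D.bruhatLE v w} =
      {v : D.W | D.IsMinRep (D.stab pi) v ∧ D.weakLE u v ∧ D.weakLE v w} := by
  ext v
  refine ⟨fun ⟨hv, huv, hvw⟩ => ?_, fun ⟨hv, huv, hvw⟩ => ⟨hv, huv.bruhatLE, hvw.bruhatLE⟩⟩
  obtain ⟨hgv, hvw'⟩ := WeylSetting.depth_eq_length_and_weakLE hpi hv hwr hw.depth_eq hvw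
  exact ⟨hv, (WeylSetting.depth_eq_length_and_weakLE hpi hur hv hgv huv).2, hvw'⟩

/-- For a dominant integral weight `π` with `Stab_W(π) = W_P` and `π`-minuscule
elements `u < w` in `W^P`, the interval `[u,w]^P` in the strong Bruhat order
coincides with the interval in the left weak Bruhat order. -/
theorem weak_eq_strong_interval
    (D : WeylSetting) (pi : D.V) (hpi : D.IsDominant pi)
    (u w : D.W) (hu : D.IsMinuscule pi u) (hw : D.IsMinuscule pi w)
    (hur : D.IsMinRep (D.stab pi) u) (hwr : D.IsMinRep (D.stab pi) w)
    (huw : D.bruhatLT u w) :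
    {v : D.W | D.IsMinRep (D.stab pi) v ∧ D.bruhatLE u v ∧ D.bruhatLE v w} =
      {v : D.W | D.IsMinRep (D.stab pi) v ∧ D.weakLE u v ∧ D.weakLE v w} :=
  weak_eq_strong_interval_general D pi hpi u w hw hur hwr
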